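/- Suppose the monotone-density assumption holds, the loss ℓ is (C,α)-Hölder, and the trigger η satisfies ‖η‖₂² ≥ 4 ηᵀ(m₁−m₀) (equivalently ‖η‖₂ ≥ 4 cos(η, m₁−m₀)‖m₁−m₀‖₂). Then for every measurable f : ℝ^p → [0,1], the clean risk satisfies ℓ^cl(f) ≤ (1−ρ)^{-1} ℓ^poi(f) + C (1−ρ)^{−α} ( max_{i=0,1} h_i^η(‖η‖₂/4) )^α. -/

import Mathlib

open MeasureTheory Real
open scoped RealInnerProductSpace

noncomputable section

/-- The clean input density `μ^cl_X(x) = λ ν₁(x) + (1-λ) ν₀(x)`. -/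
def muCl {p : ℕ} (lam : ℝ) (ν : Fin 2 → EuclideanSpace ℝ (Fin p) → ℝ)
    (x : EuclideanSpace ℝ (Fin p)) : ℝ :=
  lam * ν 1 x + (1 - lam) * ν 0 x

/-- The backdoor input density `μ^bd_X(x) = λ ν₁(x-η) + (1-λ) ν₀(x-η)`. -/
def muBd {p : ℕ} (lam : ℝ) (ν : Fin 2 → EuclideanSpace ℝ (Fin p) → ℝ)
    (η x : EuclideanSpace ℝ (Fin p)) : ℝ :=
  lam * ν 1 (x - η) + (1 - lam) * ν 0 (x - η)

/-- The poisoned input density `μ^poi_X = (1-ρ) μ^cl_X + ρ μ^bd_X`. -/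
def muPoi {p : ℕ} (lam ρ : ℝ) (ν : Fin 2 → EuclideanSpace ℝ (Fin p) → ℝ)
    (η x : EuclideanSpace ℝ (Fin p)) : ℝ :=
  (1 - ρ) * muCl lam ν x + ρ * muBd lam ν η x

/-- The clean regression function `f^cl_*(x) = λ ν₁(x) / μ^cl_X(x)`. -/
def fCl {p : ℕ} (lam : ℝ) (ν : Fin 2 → EuclideanSpace ℝ (Fin p) → ℝ)
    (x : EuclideanSpace ℝ (Fin p)) : ℝ :=
  lam * ν 1 x / muCl lam ν x

/-- The poisoned regression function `f^poi_*(x) = (1-ρ) λ ν₁(x) / μ^poi_X(x)`. -/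
def fPoi {p : ℕ} (lam ρ : ℝ) (ν : Fin 2 → EuclideanSpace ℝ (Fin p) → ℝ)
    (η x : EuclideanSpace ℝ (Fin p)) : ℝ :=
  (1 - ρ) * lam * ν 1 x / muPoi lam ρ ν η x

/-- The tail function `h_i^η(r) = ∫_{x : |(x-m)ᵀη| ≥ r ‖η‖₂} ν(x) dx`. -/
def tailProb {p : ℕ} (ν : EuclideanSpace ℝ (Fin p) → ℝ) (m η : EuclideanSpace ℝ (Fin p))
    (r : ℝ) : ℝ :=
  ∫ x in {x : EuclideanSpace ℝ (Fin p) | r * ‖η‖ ≤ |⟪x - m, η⟫|}, ν x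

/-- A Lebesgue probability density on `ℝ^p`. -/
def IsProbDensity {p : ℕ} (ν : EuclideanSpace ℝ (Fin p) → ℝ) : Prop :=
  Measurable ν ∧ (∀ x, 0 ≤ ν x) ∧ Integrable ν ∧ (∫ x, ν x) = 1

/-- `m` is the mean of the probability density `ν`. -/
def HasCondMean {p : ℕ} (ν : EuclideanSpace ℝ (Fin p) → ℝ)
    (m : EuclideanSpace ℝ (Fin p)) : Prop :=
  (∫ x, ν x • x) = m

/-- Monotone-density assumption: the density decreases along any ray from its mean. -/
def MonotoneDensity {p : ℕ} (ν : EuclideanSpace ℝ (Fin p) → ℝ)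
    (m : EuclideanSpace ℝ (Fin p)) : Prop :=
  ∀ (η : EuclideanSpace ℝ (Fin p)) (c1 c2 : ℝ), 0 < c1 → c1 < c2 →
    ν (m - c2 • η) ≤ ν (m - c1 • η)

/-- The loss `ℓ` is `(C,α)`-Hölder on `[0,1]²`. -/
def IsHolderLoss (ℓ : ℝ → ℝ → ℝ) (C α : ℝ) : Prop :=
  ∀ x ∈ Set.Icc (0:ℝ) 1, ∀ y ∈ Set.Icc (0:ℝ) 1, ∀ z ∈ Set.Icc (0:ℝ) 1,
    |ℓ x y - ℓ x z| ≤ C * |y - z| ^ α ∧ |ℓ x y - ℓ z y| ≤ C * |x - z| ^ α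

/-!
Hölder continuity of `ℓ` in its second argument bounds `ℓ^cl(f)` by `∫ ℓ(f, f^poi) dμ^cl` plus
`C ∫ |f^cl - f^poi|^α dμ^cl`. The first term is at most `(1-ρ)⁻¹ ℓ^poi(f)` because
`(1-ρ) μ^cl ≤ μ^poi`, and by Jensen the second is at most `C (∫ |f^cl - f^poi| dμ^cl)^α`.
Pointwise `|f^cl - f^poi| μ^cl ≤ (1-ρ)⁻¹ min(λν₁, μ^bd)`. Cut space along the half-space
`A = {x | ⟪x - m₁, η⟫ ≥ ‖η‖²/4}`: the `λν₁`-mass of `A` lies in the tail of `ν₁`, while the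
`μ^bd`-mass of `Aᶜ` is carried by `Aᶜ - η`, which is disjoint from `A` and, because
`‖η‖² ≥ 4⟪η, m₁ - m₀⟫`, lies in the tails of both `ν₀` and `ν₁`. Hence
`∫ min(λν₁, μ^bd) ≤ max_i h_i^η(‖η‖/4)`.
-/

open scoped NNReal

lemma integral_rpow_mul_le_rpow_integral_mul {X : Type*} [MeasurableSpace X] {μ : Measure X}
    {g w : X → ℝ} {α : ℝ} (hα₀ : 0 ≤ α) (hα₁ : α ≤ 1) (hg : ∀ x, 0 ≤ g x) (hw : Measurable w)
    (hw₀ : ∀ x, 0 ≤ w x) (hw₁ : ∫ x, w x ∂μ = 1) (hgw : Integrable (fun x => g x * w x) μ)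
    (hgαw : Integrable (fun x => g x ^ α * w x) μ) :
    ∫ x, g x ^ α * w x ∂μ ≤ (∫ x, g x * w x ∂μ) ^ α := by
  set d : X → ℝ≥0 := fun x => (w x).toNNReal
  have hd : Measurable d := hw.real_toNNReal
  have hsmul (h : X → ℝ) : (fun x => d x • h x) = fun x => h x * w x := by
    ext x
    rw [NNReal.smul_def, smul_eq_mul, Real.coe_toNNReal _ (hw₀ x), mul_comm]
  have : IsProbabilityMeasure (μ.withDensity fun x => d x) := by
    constructor
    rw [withDensity_apply _ MeasurableSet.univ, Measure.restrict_univ]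
    simp only [d, ENNReal.ofNNReal_toNNReal]
    rw [← ofReal_integral_eq_lintegral_ofReal (Integrable.of_integral_ne_zero (by simp [hw₁]))
      (ae_of_all _ hw₀), hw₁, ENNReal.ofReal_one]
  have hJ := (Real.concaveOn_rpow hα₀ hα₁).le_map_integral (μ := μ.withDensity fun x => d x)
    (Real.continuous_rpow_const hα₀).continuousOn isClosed_Ici (ae_of_all _ hg)
    (by rwa [integrable_withDensity_iff_integrable_smul hd, hsmul])
    (by rwa [integrable_withDensity_iff_integrable_smul hd, Function.comp_def, hsmul])
  rwa [integral_withDensity_eq_integral_smul hd, integral_withDensity_eq_integral_smul hd,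
    hsmul, hsmul] at hJ

lemma integral_mul_le_inv_mul_integral_mul {X : Type*} [MeasurableSpace X] {μ : Measure X}
    {L w w' : X → ℝ} {c : ℝ} (hc : 0 < c) (hL : ∀ x, 0 ≤ L x) (hw : ∀ x, 0 ≤ w x)
    (hww' : ∀ x, c * w x ≤ w' x) (hint : Integrable (fun x => L x * w' x) μ) :
    ∫ x, L x * w x ∂μ ≤ c⁻¹ * ∫ x, L x * w' x ∂μ := by
  rw [← integral_const_mul]
  refine integral_mono_of_nonneg (ae_of_all _ fun x => mul_nonneg (hL x) (hw x))
    (hint.const_mul _) (ae_of_all _ fun x => ?_)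
  have h := mul_le_mul_of_nonneg_left ((le_inv_mul_iff₀ hc).mpr (hww' x)) (hL x)
  simpa only [mul_left_comm] using h

lemma integrable_abs_sub_rpow_mul {X : Type*} [MeasurableSpace X] {μ : Measure X}
    {u v w : X → ℝ} {α : ℝ} (hα : 0 ≤ α) (hu : Measurable u) (hv : Measurable v)
    (hu01 : ∀ x, u x ∈ Set.Icc (0:ℝ) 1) (hv01 : ∀ x, v x ∈ Set.Icc (0:ℝ) 1)
    (hw : Integrable w μ) :
    Integrable (fun x => |u x - v x| ^ α * w x) μ := by
  refine hw.bdd_mul (c := 1) (by fun_prop) (ae_of_all _ fun x => ?_)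
  have huv : |u x - v x| ≤ 1 := by
    simpa using abs_sub_le_of_le_of_le (hu01 x).1 (hu01 x).2 (hv01 x).1 (hv01 x).2
  rw [Real.norm_eq_abs, abs_of_nonneg (by positivity)]
  exact Real.rpow_le_one (abs_nonneg _) huv hα

lemma integral_min_le_setIntegral_add_setIntegral_compl {X : Type*} [MeasurableSpace X]
    {μ : Measure X} {u v : X → ℝ} {s : Set X} (hs : MeasurableSet s) (hu : Integrable u μ)
    (hv : Integrable v μ) :
    ∫ x, min (u x) (v x) ∂μ ≤ ∫ x in s, u x ∂μ + ∫ x in sᶜ, v x ∂μ := by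
  have huv : Integrable (fun x => min (u x) (v x)) μ := hu.inf hv
  rw [← integral_add_compl hs huv]
  exact add_le_add (setIntegral_mono huv.integrableOn hu.integrableOn fun x => min_le_left _ _)
    (setIntegral_mono huv.integrableOn hv.integrableOn fun x => min_le_right _ _)

lemma setIntegral_comp_sub_right {G : Type*} [AddGroup G] [MeasurableSpace G] [MeasurableAdd G]
    (μ : Measure G) [μ.IsAddRightInvariant] (f : G → ℝ) (η : G) (s : Set G) :
    ∫ x in s, f (x - η) ∂μ = ∫ x in (· + η) ⁻¹' s, f x ∂μ := by
  simpa using ((measurePreserving_add_right μ η).setIntegral_preimage_emb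
    (measurableEmbedding_addRight η) (fun x => f (x - η)) s).symm

namespace IsHolderLoss

variable {ℓ : ℝ → ℝ → ℝ} {C α : ℝ}

lemma abs_sub_le (hℓ : IsHolderLoss ℓ C α) {a b c d : ℝ} (ha : a ∈ Set.Icc (0:ℝ) 1)
    (hb : b ∈ Set.Icc (0:ℝ) 1) (hc : c ∈ Set.Icc (0:ℝ) 1) (hd : d ∈ Set.Icc (0:ℝ) 1) :
    |ℓ a b - ℓ c d| ≤ C * |a - c| ^ α + C * |b - d| ^ α := by
  have h₁ := (hℓ a ha b hb d hd).1
  have h₂ := (hℓ a ha d hd c hc).2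
  calc |ℓ a b - ℓ c d| ≤ |ℓ a b - ℓ a d| + |ℓ a d - ℓ c d| := _root_.abs_sub_le _ _ _
    _ ≤ _ := by linarith

lemma continuousOn (hℓ : IsHolderLoss ℓ C α) (hα : 0 < α) :
    ContinuousOn (Function.uncurry ℓ) (Set.Icc (0:ℝ) 1 ×ˢ Set.Icc (0:ℝ) 1) := by
  intro q hq
  have hcont : Continuous fun r : ℝ × ℝ => C * |r.1 - q.1| ^ α + C * |r.2 - q.2| ^ α := by
    fun_prop (disch := exact hα.le)
  have hbound := (hcont.tendsto' q 0 (by simp [Real.zero_rpow hα.ne'])).mono_left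
    (nhdsWithin_le_nhds (s := Set.Icc (0:ℝ) 1 ×ˢ Set.Icc (0:ℝ) 1))
  rw [ContinuousWithinAt, tendsto_iff_dist_tendsto_zero]
  refine squeeze_zero' (Filter.Eventually.of_forall fun r => dist_nonneg) ?_ hbound
  filter_upwards [self_mem_nhdsWithin] with r hr
  exact hℓ.abs_sub_le hr.1 hr.2 hq.1 hq.2

lemma measurable_comp (hℓ : IsHolderLoss ℓ C α) (hα : 0 < α) {X : Type*} [MeasurableSpace X]
    {f g : X → ℝ} (hf : Measurable f) (hg : Measurable g) (hf01 : ∀ x, f x ∈ Set.Icc (0:ℝ) 1)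
    (hg01 : ∀ x, g x ∈ Set.Icc (0:ℝ) 1) :
    Measurable fun x => ℓ (f x) (g x) :=
  (hℓ.continuousOn hα).domRestrict.measurable.comp
    ((hf.prodMk hg).subtype_mk (h := fun x => ⟨hf01 x, hg01 x⟩))

lemma integrable_mul (hℓ : IsHolderLoss ℓ C α) (hα : 0 < α) {X : Type*} [MeasurableSpace X]
    {μ : Measure X} {f g w : X → ℝ} (hf : Measurable f) (hg : Measurable g)
    (hf01 : ∀ x, f x ∈ Set.Icc (0:ℝ) 1) (hg01 : ∀ x, g x ∈ Set.Icc (0:ℝ) 1)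
    (hw : Integrable w μ) :
    Integrable (fun x => ℓ (f x) (g x) * w x) μ := by
  obtain ⟨B, hB⟩ := (isCompact_Icc.prod isCompact_Icc).exists_bound_of_continuousOn
    (hℓ.continuousOn hα)
  exact hw.bdd_mul (hℓ.measurable_comp hα hf hg hf01 hg01).aestronglyMeasurable
    (ae_of_all _ fun x => hB (f x, g x) ⟨hf01 x, hg01 x⟩)

lemma integral_mul_le_add (hℓ : IsHolderLoss ℓ C α) (hα : 0 < α) {X : Type*} [MeasurableSpace X]
    {μ : Measure X} {f u v w : X → ℝ} (hf : Measurable f) (hu : Measurable u) (hv : Measurable v)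
    (hf01 : ∀ x, f x ∈ Set.Icc (0:ℝ) 1) (hu01 : ∀ x, u x ∈ Set.Icc (0:ℝ) 1)
    (hv01 : ∀ x, v x ∈ Set.Icc (0:ℝ) 1) (hw₀ : ∀ x, 0 ≤ w x) (hw : Integrable w μ) :
    ∫ x, ℓ (f x) (u x) * w x ∂μ
      ≤ ∫ x, ℓ (f x) (v x) * w x ∂μ + C * ∫ x, |u x - v x| ^ α * w x ∂μ := by
  have hgap := (integrable_abs_sub_rpow_mul hα.le hu hv hu01 hv01 hw).const_mul C
  have hv_int := hℓ.integrable_mul hα hf hv hf01 hv01 hw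
  rw [← integral_const_mul, ← integral_add hv_int hgap]
  refine integral_mono (hℓ.integrable_mul hα hf hu hf01 hu01 hw) (hv_int.add hgap) fun x => ?_
  have h := (abs_le.mp (hℓ (f x) (hf01 x) (u x) (hu01 x) (v x) (hv01 x)).1).2
  nlinarith [hw₀ x]

end IsHolderLoss

/-- With `n, a, b` standing for `λ ν₁ x`, `μ^cl x`, `μ^bd x`, the left side is
`|f^cl x - f^poi x| μ^cl x = ρ n b / ((1 - ρ) a + ρ b)`. -/
lemma abs_div_sub_div_mul_le {ρ n a b : ℝ} (hρ₀ : 0 ≤ ρ) (hρ₁ : ρ < 1) (hn : 0 ≤ n)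
    (hna : n ≤ a) (hb : 0 ≤ b) :
    |n / a - (1 - ρ) * n / ((1 - ρ) * a + ρ * b)| * a ≤ (1 - ρ)⁻¹ * min n b := by
  have h1ρ : 0 < 1 - ρ := sub_pos.mpr hρ₁
  have hrhs : 0 ≤ (1 - ρ)⁻¹ * min n b := by positivity
  rcases (hn.trans hna).eq_or_lt with rfl | ha
  · simpa using hrhs
  have hP : 0 < (1 - ρ) * a + ρ * b := by positivity
  have hgap : |n / a - (1 - ρ) * n / ((1 - ρ) * a + ρ * b)| * a
      = n * (ρ * b) / ((1 - ρ) * a + ρ * b) := by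
    rw [show n / a - (1 - ρ) * n / ((1 - ρ) * a + ρ * b)
        = n * (ρ * b) / (a * ((1 - ρ) * a + ρ * b)) by field_simp; ring,
      abs_of_nonneg (by positivity)]
    field_simp
  rw [hgap, mul_min_of_nonneg _ _ (inv_nonneg.mpr h1ρ.le), le_min_iff, inv_mul_eq_div,
    inv_mul_eq_div, div_le_div_iff₀ hP h1ρ, div_le_div_iff₀ hP h1ρ]
  constructor
  · nlinarith [mul_nonneg (mul_nonneg hn hρ₀) hb, mul_nonneg (mul_nonneg h1ρ.le hn) ha.le]
  · nlinarith [mul_nonneg (mul_nonneg h1ρ.le hb) (sub_nonneg.mpr hna),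
      mul_nonneg (mul_nonneg (mul_nonneg h1ρ.le hb) hn) h1ρ.le, mul_nonneg (mul_nonneg hρ₀ hb) hb]

section Densities

variable {p : ℕ} {lam ρ : ℝ} {ν : Fin 2 → EuclideanSpace ℝ (Fin p) → ℝ}
  {η : EuclideanSpace ℝ (Fin p)}

lemma muBd_eq_muCl_sub (x : EuclideanSpace ℝ (Fin p)) :
    muBd lam ν η x = muCl lam ν (x - η) := rfl

lemma muCl_nonneg (hlam : lam ∈ Set.Icc (0:ℝ) 1) (hν₀ : ∀ i x, 0 ≤ ν i x)
    (x : EuclideanSpace ℝ (Fin p)) : 0 ≤ muCl lam ν x :=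
  add_nonneg (mul_nonneg hlam.1 (hν₀ 1 x)) (mul_nonneg (sub_nonneg.mpr hlam.2) (hν₀ 0 x))

lemma muPoi_nonneg (hlam : lam ∈ Set.Icc (0:ℝ) 1) (hρ : ρ ∈ Set.Icc (0:ℝ) 1)
    (hν₀ : ∀ i x, 0 ≤ ν i x) (x : EuclideanSpace ℝ (Fin p)) : 0 ≤ muPoi lam ρ ν η x :=
  add_nonneg (mul_nonneg (sub_nonneg.mpr hρ.2) (muCl_nonneg hlam hν₀ x))
    (mul_nonneg hρ.1 (muCl_nonneg hlam hν₀ (x - η)))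

lemma mul_muCl_le_muPoi (hlam : lam ∈ Set.Icc (0:ℝ) 1) (hρ : 0 ≤ ρ) (hν₀ : ∀ i x, 0 ≤ ν i x)
    (x : EuclideanSpace ℝ (Fin p)) : (1 - ρ) * muCl lam ν x ≤ muPoi lam ρ ν η x :=
  le_add_of_nonneg_right (mul_nonneg hρ (muCl_nonneg hlam hν₀ (x - η)))

lemma mul_le_muCl (hlam : lam ≤ 1) (hν₀ : ∀ i x, 0 ≤ ν i x) (x : EuclideanSpace ℝ (Fin p)) :
    lam * ν 1 x ≤ muCl lam ν x :=
  le_add_of_nonneg_right (mul_nonneg (sub_nonneg.mpr hlam) (hν₀ 0 x))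

lemma fCl_mem_Icc (hlam : lam ∈ Set.Icc (0:ℝ) 1) (hν₀ : ∀ i x, 0 ≤ ν i x)
    (x : EuclideanSpace ℝ (Fin p)) : fCl lam ν x ∈ Set.Icc (0:ℝ) 1 :=
  ⟨div_nonneg (mul_nonneg hlam.1 (hν₀ 1 x)) (muCl_nonneg hlam hν₀ x),
    div_le_one_of_le₀ (mul_le_muCl hlam.2 hν₀ x) (muCl_nonneg hlam hν₀ x)⟩

lemma fPoi_mem_Icc (hlam : lam ∈ Set.Icc (0:ℝ) 1) (hρ : ρ ∈ Set.Icc (0:ℝ) 1)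
    (hν₀ : ∀ i x, 0 ≤ ν i x) (x : EuclideanSpace ℝ (Fin p)) :
    fPoi lam ρ ν η x ∈ Set.Icc (0:ℝ) 1 := by
  have hnum : (1 - ρ) * lam * ν 1 x ≤ muPoi lam ρ ν η x := by
    rw [mul_assoc]
    exact (mul_le_mul_of_nonneg_left (mul_le_muCl hlam.2 hν₀ x) (sub_nonneg.mpr hρ.2)).trans
      (mul_muCl_le_muPoi hlam hρ.1 hν₀ x)
  exact ⟨div_nonneg (mul_nonneg (mul_nonneg (sub_nonneg.mpr hρ.2) hlam.1) (hν₀ 1 x))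
      (muPoi_nonneg hlam hρ hν₀ x), div_le_one_of_le₀ hnum (muPoi_nonneg hlam hρ hν₀ x)⟩

lemma measurable_muCl (hν : ∀ i, Measurable (ν i)) : Measurable (muCl lam ν) := by
  unfold muCl
  fun_prop

lemma measurable_muPoi (hν : ∀ i, Measurable (ν i)) : Measurable (muPoi lam ρ ν η) := by
  unfold muPoi
  simp_rw [muBd_eq_muCl_sub]
  have := measurable_muCl (lam := lam) hν
  fun_prop

lemma measurable_fCl (hν : ∀ i, Measurable (ν i)) : Measurable (fCl lam ν) := by
  unfold fCl
  have := measurable_muCl (lam := lam) hν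
  fun_prop

lemma measurable_fPoi (hν : ∀ i, Measurable (ν i)) : Measurable (fPoi lam ρ ν η) := by
  unfold fPoi
  have := measurable_muPoi (lam := lam) (ρ := ρ) (η := η) hν
  fun_prop

lemma integrable_muCl (hν : ∀ i, Integrable (ν i)) : Integrable (muCl lam ν) :=
  ((hν 1).const_mul lam).add ((hν 0).const_mul (1 - lam))

lemma integrable_muPoi (hν : ∀ i, Integrable (ν i)) : Integrable (muPoi lam ρ ν η) :=
  ((integrable_muCl hν).const_mul (1 - ρ)).add (((integrable_muCl hν).comp_sub_right η).const_mul ρ)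

lemma integral_muCl (hν : ∀ i, Integrable (ν i)) (hν₁ : ∀ i, ∫ x, ν i x = 1) :
    ∫ x, muCl lam ν x = 1 := by
  unfold muCl
  rw [integral_add ((hν 1).const_mul lam) ((hν 0).const_mul (1 - lam)), integral_const_mul,
    integral_const_mul, hν₁ 0, hν₁ 1]
  ring

lemma abs_fCl_sub_fPoi_mul_muCl_le (hlam : lam ∈ Set.Icc (0:ℝ) 1) (hρ : ρ ∈ Set.Ico (0:ℝ) 1)
    (hν₀ : ∀ i x, 0 ≤ ν i x) (x : EuclideanSpace ℝ (Fin p)) :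
    |fCl lam ν x - fPoi lam ρ ν η x| * muCl lam ν x
      ≤ (1 - ρ)⁻¹ * min (lam * ν 1 x) (muBd lam ν η x) := by
  rw [fCl, fPoi, muPoi, mul_assoc]
  exact abs_div_sub_div_mul_le hρ.1 hρ.2 (mul_nonneg hlam.1 (hν₀ 1 x)) (mul_le_muCl hlam.2 hν₀ x)
    (muCl_nonneg hlam hν₀ (x - η))

end Densities

lemma inner_sub_lt_of_inner_add_lt {E : Type*} [NormedAddCommGroup E] [InnerProductSpace ℝ E]
    {m₀ m₁ η y : E} (hη : 4 * ⟪η, m₁ - m₀⟫ ≤ ‖η‖ ^ 2)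
    (hy : ⟪y + η - m₁, η⟫ < ‖η‖ / 4 * ‖η‖) :
    ⟪y - m₀, η⟫ < -(‖η‖ / 4 * ‖η‖) ∧ ⟪y - m₁, η⟫ < -(‖η‖ / 4 * ‖η‖) := by
  have h₁ : ⟪y + η - m₁, η⟫ = ⟪y - m₁, η⟫ + ‖η‖ ^ 2 := by
    rw [show y + η - m₁ = (y - m₁) + η by abel, inner_add_left, real_inner_self_eq_norm_sq]
  have h₀ : ⟪y - m₀, η⟫ = ⟪y - m₁, η⟫ + ⟪η, m₁ - m₀⟫ := by
    rw [show y - m₀ = (y - m₁) + (m₁ - m₀) by abel, inner_add_left, real_inner_comm η (m₁ - m₀)]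
  have hsq := sq_nonneg ‖η‖
  constructor <;> linarith

lemma integral_min_muBd_le_max_tailProb {p : ℕ} {lam : ℝ}
    {ν : Fin 2 → EuclideanSpace ℝ (Fin p) → ℝ} {m : Fin 2 → EuclideanSpace ℝ (Fin p)}
    {η : EuclideanSpace ℝ (Fin p)} (hlam : lam ∈ Set.Icc (0:ℝ) 1) (hν₀ : ∀ i x, 0 ≤ ν i x)
    (hν : ∀ i, Integrable (ν i)) (hη : 4 * ⟪η, m 1 - m 0⟫ ≤ ‖η‖ ^ 2) :
    ∫ x, min (lam * ν 1 x) (muBd lam ν η x) ≤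
      max (tailProb (ν 0) (m 0) η (‖η‖ / 4)) (tailProb (ν 1) (m 1) η (‖η‖ / 4)) := by
  set r := ‖η‖ / 4 * ‖η‖
  set A := {x : EuclideanSpace ℝ (Fin p) | r ≤ ⟪x - m 1, η⟫}
  set T := (· + η) ⁻¹' Aᶜ
  have hr : 0 ≤ r := by positivity
  have hA : MeasurableSet A := measurableSet_le measurable_const (by fun_prop)
  have hT : MeasurableSet T := hA.compl.preimage (measurable_add_const η)
  have hTA (y) (hy : y ∈ T) : ⟪y - m 0, η⟫ < -r ∧ ⟪y - m 1, η⟫ < -r :=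
    inner_sub_lt_of_inner_add_lt hη (not_le.mp hy)
  have hAT : Disjoint A T :=
    Set.disjoint_left.mpr fun x hxA hxT => by linarith [(hTA x hxT).2, show r ≤ _ from hxA]
  have htail₁ : (∫ x in A, ν 1 x) + ∫ x in T, ν 1 x ≤ tailProb (ν 1) (m 1) η (‖η‖ / 4) := by
    rw [← setIntegral_union hAT hT (hν 1).integrableOn (hν 1).integrableOn]
    refine setIntegral_mono_set (hν 1).integrableOn (ae_of_all _ (hν₀ 1)) (ae_of_all _ ?_)
    rintro x (hx | hx)
    · exact (show r ≤ _ from hx).trans (le_abs_self _)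
    · exact (lt_neg.mp (hTA x hx).2).le.trans (neg_le_abs _)
  have htail₀ : ∫ x in T, ν 0 x ≤ tailProb (ν 0) (m 0) η (‖η‖ / 4) :=
    setIntegral_mono_set (hν 0).integrableOn (ae_of_all _ (hν₀ 0))
      (ae_of_all _ fun x hx => (lt_neg.mp (hTA x hx).1).le.trans (neg_le_abs _))
  have hbd : ∫ x in Aᶜ, muBd lam ν η x
      = lam * (∫ x in T, ν 1 x) + (1 - lam) * ∫ x in T, ν 0 x := by
    simp_rw [muBd_eq_muCl_sub]
    rw [setIntegral_comp_sub_right]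
    unfold muCl
    rw [integral_add ((hν 1).integrableOn.const_mul lam) ((hν 0).integrableOn.const_mul _),
      integral_const_mul, integral_const_mul]
  calc ∫ x, min (lam * ν 1 x) (muBd lam ν η x)
      ≤ (∫ x in A, lam * ν 1 x) + ∫ x in Aᶜ, muBd lam ν η x :=
        integral_min_le_setIntegral_add_setIntegral_compl hA ((hν 1).const_mul lam)
          (((integrable_muCl hν).comp_sub_right η))
    _ = lam * ((∫ x in A, ν 1 x) + ∫ x in T, ν 1 x) + (1 - lam) * ∫ x in T, ν 0 x := by
        rw [integral_const_mul, hbd]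
        ring
    _ ≤ (1 - lam) * tailProb (ν 0) (m 0) η (‖η‖ / 4)
          + lam * tailProb (ν 1) (m 1) η (‖η‖ / 4) := by
        linarith [mul_le_mul_of_nonneg_left htail₁ hlam.1,
          mul_le_mul_of_nonneg_left htail₀ (sub_nonneg.mpr hlam.2)]
    _ ≤ _ := Convex.combo_le_max _ _ (sub_nonneg.mpr hlam.2) hlam.1 (sub_add_cancel 1 lam)

section Deviation

variable {p : ℕ} {lam ρ : ℝ} {ν : Fin 2 → EuclideanSpace ℝ (Fin p) → ℝ}
  {m : Fin 2 → EuclideanSpace ℝ (Fin p)} {η : EuclideanSpace ℝ (Fin p)}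

lemma integral_abs_fCl_sub_fPoi_mul_muCl_le (hlam : lam ∈ Set.Icc (0:ℝ) 1)
    (hρ : ρ ∈ Set.Ico (0:ℝ) 1) (hν₀ : ∀ i x, 0 ≤ ν i x) (hν : ∀ i, Integrable (ν i))
    (hη : 4 * ⟪η, m 1 - m 0⟫ ≤ ‖η‖ ^ 2) :
    ∫ x, |fCl lam ν x - fPoi lam ρ ν η x| * muCl lam ν x ≤ (1 - ρ)⁻¹ *
      max (tailProb (ν 0) (m 0) η (‖η‖ / 4)) (tailProb (ν 1) (m 1) η (‖η‖ / 4)) := by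
  have hmin : Integrable fun x => min (lam * ν 1 x) (muBd lam ν η x) :=
    ((hν 1).const_mul lam).inf ((integrable_muCl hν).comp_sub_right η)
  calc ∫ x, |fCl lam ν x - fPoi lam ρ ν η x| * muCl lam ν x
      ≤ ∫ x, (1 - ρ)⁻¹ * min (lam * ν 1 x) (muBd lam ν η x) :=
        integral_mono_of_nonneg
          (ae_of_all _ fun x => mul_nonneg (abs_nonneg _) (muCl_nonneg hlam hν₀ x))
          (hmin.const_mul _) (ae_of_all _ (abs_fCl_sub_fPoi_mul_muCl_le hlam hρ hν₀))
    _ ≤ _ := by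
        rw [integral_const_mul]
        exact mul_le_mul_of_nonneg_left (integral_min_muBd_le_max_tailProb hlam hν₀ hν hη)
          (inv_nonneg.mpr (sub_nonneg.mpr hρ.2.le))

lemma integral_abs_fCl_sub_fPoi_rpow_mul_muCl_le {α : ℝ} (hα : α ∈ Set.Icc (0:ℝ) 1)
    (hlam : lam ∈ Set.Icc (0:ℝ) 1) (hρ : ρ ∈ Set.Ico (0:ℝ) 1) (hν : ∀ i, IsProbDensity (ν i))
    (hη : 4 * ⟪η, m 1 - m 0⟫ ≤ ‖η‖ ^ 2) :
    ∫ x, |fCl lam ν x - fPoi lam ρ ν η x| ^ α * muCl lam ν x ≤ (1 - ρ) ^ (-α) *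
      max (tailProb (ν 0) (m 0) η (‖η‖ / 4)) (tailProb (ν 1) (m 1) η (‖η‖ / 4)) ^ α := by
  have hνm i := (hν i).1
  have hν₀ i := (hν i).2.1
  have hνi i := (hν i).2.2.1
  have h1ρ : 0 ≤ 1 - ρ := sub_nonneg.mpr hρ.2.le
  have hρ' : ρ ∈ Set.Icc (0:ℝ) 1 := Set.Ico_subset_Icc_self hρ
  have hfCl := measurable_fCl (lam := lam) hνm
  have hfPoi := measurable_fPoi (lam := lam) (ρ := ρ) (η := η) hνm
  have hgap (β : ℝ) (hβ : 0 ≤ β) :=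
    integrable_abs_sub_rpow_mul hβ hfCl hfPoi (fCl_mem_Icc hlam hν₀) (fPoi_mem_Icc hlam hρ' hν₀)
      (integrable_muCl (lam := lam) hνi)
  have hM : 0 ≤ max (tailProb (ν 0) (m 0) η (‖η‖ / 4)) (tailProb (ν 1) (m 1) η (‖η‖ / 4)) :=
    le_max_of_le_left (integral_nonneg (hν₀ 0))
  calc ∫ x, |fCl lam ν x - fPoi lam ρ ν η x| ^ α * muCl lam ν x
      ≤ (∫ x, |fCl lam ν x - fPoi lam ρ ν η x| * muCl lam ν x) ^ α :=
        integral_rpow_mul_le_rpow_integral_mul hα.1 hα.2 (fun x => abs_nonneg _)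
          (measurable_muCl hνm) (muCl_nonneg hlam hν₀) (integral_muCl hνi fun i => (hν i).2.2.2)
          (by simpa using hgap 1 zero_le_one) (hgap α hα.1)
    _ ≤ ((1 - ρ)⁻¹ * max (tailProb (ν 0) (m 0) η (‖η‖ / 4))
          (tailProb (ν 1) (m 1) η (‖η‖ / 4))) ^ α :=
        Real.rpow_le_rpow (integral_nonneg fun x => mul_nonneg (abs_nonneg _)
          (muCl_nonneg hlam hν₀ x)) (integral_abs_fCl_sub_fPoi_mul_muCl_le hlam hρ hν₀ hνi hη) hα.1
    _ = _ := by rw [Real.mul_rpow (inv_nonneg.mpr h1ρ) hM, Real.inv_rpow h1ρ, Real.rpow_neg h1ρ]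

end Deviation

theorem clean_risk_upper_bound {p : ℕ}
    (ν : Fin 2 → EuclideanSpace ℝ (Fin p) → ℝ) (m : Fin 2 → EuclideanSpace ℝ (Fin p))
    (lam ρ : ℝ) (hlam : lam ∈ Set.Ioo (0:ℝ) 1) (hρ : ρ ∈ Set.Ioo (0:ℝ) 1)
    (hν : ∀ i, IsProbDensity (ν i))
    (ℓ : ℝ → ℝ → ℝ) (C α : ℝ) (hC : 0 < C) (hα : α ∈ Set.Ioc (0:ℝ) 1)
    (hℓ : IsHolderLoss ℓ C α)
    (hℓnn : ∀ x ∈ Set.Icc (0:ℝ) 1, ∀ y ∈ Set.Icc (0:ℝ) 1, 0 ≤ ℓ x y)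
    (η : EuclideanSpace ℝ (Fin p)) (hη : 4 * ⟪η, m 1 - m 0⟫ ≤ ‖η‖ ^ 2)
    (f : EuclideanSpace ℝ (Fin p) → ℝ) (hfmeas : Measurable f)
    (hf01 : ∀ x, f x ∈ Set.Icc (0:ℝ) 1) :
    (∫ x, ℓ (f x) (fCl lam ν x) * muCl lam ν x) ≤
      (1 - ρ)⁻¹ * (∫ x, ℓ (f x) (fPoi lam ρ ν η x) * muPoi lam ρ ν η x)
        + C * (1 - ρ) ^ (-α) *
          (max (tailProb (ν 0) (m 0) η (‖η‖ / 4))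
               (tailProb (ν 1) (m 1) η (‖η‖ / 4))) ^ α := by
  have hνm i := (hν i).1
  have hν₀ i := (hν i).2.1
  have hνi i := (hν i).2.2.1
  have hlam' := Set.Ioo_subset_Icc_self hlam
  have hρ' := Set.Ioo_subset_Icc_self hρ
  have hfPoi := fPoi_mem_Icc (η := η) hlam' hρ' hν₀
  have hmeasure_change := integral_mul_le_inv_mul_integral_mul (μ := volume) (sub_pos.mpr hρ.2)
    (fun x => hℓnn _ (hf01 x) _ (hfPoi x)) (muCl_nonneg hlam' hν₀)
    (mul_muCl_le_muPoi (η := η) hlam' hρ.1.le hν₀)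
    (hℓ.integrable_mul hα.1 hfmeas (measurable_fPoi hνm) hf01 hfPoi (integrable_muPoi hνi))
  have hdeviation := integral_abs_fCl_sub_fPoi_rpow_mul_muCl_le (m := m) ⟨hα.1.le, hα.2⟩ hlam'
    (Set.Ioo_subset_Ico_self hρ) hν hη
  calc ∫ x, ℓ (f x) (fCl lam ν x) * muCl lam ν x
      ≤ (∫ x, ℓ (f x) (fPoi lam ρ ν η x) * muCl lam ν x)
          + C * ∫ x, |fCl lam ν x - fPoi lam ρ ν η x| ^ α * muCl lam ν x :=
        hℓ.integral_mul_le_add hα.1 hfmeas (measurable_fCl hνm) (measurable_fPoi hνm) hf01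
          (fCl_mem_Icc hlam' hν₀) hfPoi (muCl_nonneg hlam' hν₀) (integrable_muCl hνi)
    _ ≤ _ := by
        rw [mul_assoc]
        exact add_le_add hmeasure_change (mul_le_mul_of_nonneg_left hdeviation hC.le)
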